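/- Let N ≥ 1, let Q be a real symmetric N×N matrix, q, d ∈ ℝ^N, γ, c, b ∈ ℝ, α₁, α₂ ∈ ℝ, β ∈ ℝ with β ≠ −1, and ω ∈ ℝ^N. Let ℒ be the operator with parameters (Q, q, γ, d, c, b, α₁, α₂). Then for every u ∈ C²(ℝ^{N+1}_+) and every point of ℝ^{N+1}_+ one has ℒ(S_{β,ω}u) = S_{β,ω}(Mu), where Mu := y^{α₁} Tr(Q D²_x u) + 2(β+1) y^{(α₁+α₂+2β)/2} (D²_x u · ω)·q + γ(β+1)² y^{α₂+2β} (D²_x u · ω)·ω + 2 y^{(α₁+α₂)/2} q·∇_x(∂_y u) + 2γ(β+1) y^{α₂+β} ω·∇_x(∂_y u) + γ y^{α₂} ∂²_{yy}u + c y^{α₂−1} ∂_y u − b y^{α₂−2} u + (c+γβ)(β+1) y^{α₂+β−1} ω·∇_x u + y^{(α₁+α₂)/2−1} d·∇_x u. -/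

import Mathlib

open MeasureTheory Real

noncomputable section

/-- Points of `ℝ^{N+1} = ℝ^N × ℝ`. -/
abbrev Pt (N : ℕ) := (Fin N → ℝ) × ℝ

/-- Directional (partial) derivative of `u` at `z` in the direction `v`. -/
def pd {N : ℕ} (v : Pt N) (u : Pt N → ℝ) (z : Pt N) : ℝ := fderiv ℝ u z v

/-- The unit vector in the `i`-th `x`-direction. -/
def ex {N : ℕ} (i : Fin N) : Pt N := (Pi.single i 1, 0)

/-- The unit vector in the `y`-direction. -/
def ey {N : ℕ} : Pt N := (0, 1)

/-- The map `S_{β,ω} u (x, y) = u(x + ω y^{β+1}, y)`. -/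
def Sbo {N : ℕ} (β : ℝ) (ω : Fin N → ℝ) (u : Pt N → ℝ) : Pt N → ℝ := fun z =>
  u (z.1 + z.2 ^ (β + 1) • ω, z.2)

/-- The degenerate operator
`ℒu = y^{α₁} Tr(Q D²_x u) + 2 y^{(α₁+α₂)/2} q·∇_x(∂_y u) + γ y^{α₂} ∂²_{yy} u
      + y^{(α₁+α₂)/2−1} d·∇_x u + c y^{α₂−1} ∂_y u − b y^{α₂−2} u`. -/
def opL {N : ℕ} (Q : Matrix (Fin N) (Fin N) ℝ) (q d : Fin N → ℝ) (γ c b α₁ α₂ : ℝ)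
    (u : Pt N → ℝ) (z : Pt N) : ℝ :=
  z.2 ^ α₁ * (∑ i, ∑ j, Q i j * pd (ex i) (pd (ex j) u) z)
    + 2 * z.2 ^ ((α₁ + α₂) / 2) * (∑ i, q i * pd (ex i) (pd ey u) z)
    + γ * z.2 ^ α₂ * pd ey (pd ey u) z
    + z.2 ^ ((α₁ + α₂) / 2 - 1) * (∑ i, d i * pd (ex i) u z)
    + c * z.2 ^ (α₂ - 1) * pd ey u z
    - b * z.2 ^ (α₂ - 2) * u z

/-! `S_{β,ω}` is composition with the shear `Φ(x, y) = (x + y^{β+1} ω, y)`, whose differential at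
`(x, y)` sends `v` to `v + (β+1) y^β v_y (ω, 0)`. Hence on the half-space
`∂_v (S g) = S (∂_v g) + (β+1) y^β v_y S (ω·∇_x g)`. Applying this twice, where the `y`-derivative
also falls on the coefficient `y^β`, and using the symmetry of second derivatives to merge the two
mixed terms `∂_y ∂_ω` and `∂_ω ∂_y`, turns `ℒ (S u)` into `S (M u)`. -/

open Filter Topology

variable {N : ℕ}

@[simp]
lemma ex_snd (i : Fin N) : (ex i : Pt N).2 = 0 := rfl

@[simp]
lemma ey_snd : (ey : Pt N).2 = 1 := rfl

lemma mk_zero_eq_sum_ex (x : Fin N → ℝ) : ((x, 0) : Pt N) = ∑ i, x i • ex i := by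
  ext j
  · simp [ex, Prod.fst_sum, Finset.sum_apply, Pi.single_apply]
  · simp [ex, Prod.snd_sum]

lemma pd_mk_zero_eq_sum (x : Fin N → ℝ) (f : Pt N → ℝ) (z : Pt N) :
    pd (x, 0) f z = ∑ i, x i * pd (ex i) f z := by
  simp [pd, mk_zero_eq_sum_ex x]

lemma pd_pd_eq_fderiv_fderiv {f : Pt N → ℝ} {z : Pt N} (hf : DifferentiableAt ℝ (fderiv ℝ f) z)
    (v w : Pt N) : pd v (pd w f) z = fderiv ℝ (fderiv ℝ f) z v w := by
  unfold pd
  rw [fderiv_clm_apply hf (differentiableAt_const w)]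
  simp

lemma differentiableAt_pd {f : Pt N → ℝ} {z : Pt N} (hf : DifferentiableAt ℝ (fderiv ℝ f) z)
    (v : Pt N) : DifferentiableAt ℝ (pd v f) z :=
  hf.clm_apply (differentiableAt_const v)

lemma pd_pd_mk_zero_eq_sum {f : Pt N → ℝ} {z : Pt N} (hf : DifferentiableAt ℝ (fderiv ℝ f) z)
    (x y : Fin N → ℝ) :
    pd (x, 0) (pd (y, 0) f) z = ∑ i, ∑ j, x i * y j * pd (ex i) (pd (ex j) f) z := by
  simp only [pd_pd_eq_fderiv_fderiv hf, mk_zero_eq_sum_ex, map_sum, map_smul, FunLike.coe_sum,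
    FunLike.coe_smul, Finset.sum_apply, Pi.smul_apply, smul_eq_mul, Finset.mul_sum]
  rw [Finset.sum_comm]
  exact Finset.sum_congr rfl fun i _ => Finset.sum_congr rfl fun j _ => by ring

lemma ContDiffAt.differentiableAt_fderiv {f : Pt N → ℝ} {z : Pt N} (hf : ContDiffAt ℝ 2 f z) :
    DifferentiableAt ℝ (fderiv ℝ f) z :=
  (hf.fderiv_right (m := 1) (by norm_num)).differentiableAt (by norm_num)

lemma ContDiffAt.pd_pd_comm {f : Pt N → ℝ} {z : Pt N} (hf : ContDiffAt ℝ 2 f z) (v w : Pt N) :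
    pd v (pd w f) z = pd w (pd v f) z := by
  rw [pd_pd_eq_fderiv_fderiv hf.differentiableAt_fderiv,
    pd_pd_eq_fderiv_fderiv hf.differentiableAt_fderiv]
  exact hf.isSymmSndFDerivAt (by simp) v w

lemma pd_add {f g : Pt N → ℝ} {z : Pt N} (hf : DifferentiableAt ℝ f z)
    (hg : DifferentiableAt ℝ g z) (v : Pt N) :
    pd v (fun w => f w + g w) z = pd v f z + pd v g z := by
  simp [pd, fderiv_fun_add hf hg]

lemma pd_mul {f g : Pt N → ℝ} {z : Pt N} (hf : DifferentiableAt ℝ f z)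
    (hg : DifferentiableAt ℝ g z) (v : Pt N) :
    pd v (fun w => f w * g w) z = pd v f z * g z + f z * pd v g z := by
  simp only [pd, fderiv_fun_mul hf hg, add_apply, smul_apply, smul_eq_mul]
  ring

lemma pd_const_mul {f : Pt N → ℝ} {z : Pt N} (hf : DifferentiableAt ℝ f z) (a : ℝ) (v : Pt N) :
    pd v (fun w => a * f w) z = a * pd v f z := by
  simp [pd, fderiv_const_mul hf]

lemma pd_congr {f g : Pt N → ℝ} {z : Pt N} (h : f =ᶠ[𝓝 z] g) (v : Pt N) :
    pd v f z = pd v g z := by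
  rw [pd, pd, h.fderiv_eq]

lemma hasFDerivAt_snd_rpow {z : Pt N} (hz : 0 < z.2) (p : ℝ) :
    HasFDerivAt (fun w : Pt N => w.2 ^ p)
      ((p * z.2 ^ (p - 1)) • ContinuousLinearMap.snd ℝ (Fin N → ℝ) ℝ) z :=
  (Real.hasDerivAt_rpow_const (Or.inl hz.ne')).comp_hasFDerivAt z hasFDerivAt_snd

lemma pd_snd_rpow {z : Pt N} (hz : 0 < z.2) (p : ℝ) (v : Pt N) :
    pd v (fun w : Pt N => w.2 ^ p) z = p * z.2 ^ (p - 1) * v.2 := by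
  simp [pd, (hasFDerivAt_snd_rpow hz p).fderiv]

lemma isOpen_setOf_snd_pos : IsOpen {z : Pt N | 0 < z.2} :=
  isOpen_lt continuous_const continuous_snd

def shear (β : ℝ) (ω : Fin N → ℝ) (z : Pt N) : Pt N := z + z.2 ^ (β + 1) • ((ω, 0) : Pt N)

@[simp]
lemma shear_snd (β : ℝ) (ω : Fin N → ℝ) (z : Pt N) : (shear β ω z).2 = z.2 := by
  simp [shear]

lemma Sbo_apply (β : ℝ) (ω : Fin N → ℝ) (g : Pt N → ℝ) (z : Pt N) :
    Sbo β ω g z = g (shear β ω z) := by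
  simp only [Sbo, shear]
  congr 1
  ext <;> simp

lemma hasFDerivAt_shear (β : ℝ) (ω : Fin N → ℝ) {z : Pt N} (hz : 0 < z.2) :
    HasFDerivAt (shear β ω)
      (ContinuousLinearMap.id ℝ (Pt N) + (((β + 1) * z.2 ^ β) •
        ContinuousLinearMap.snd ℝ (Fin N → ℝ) ℝ).smulRight ((ω, 0) : Pt N)) z := by
  have h := (hasFDerivAt_id z).add ((hasFDerivAt_snd_rpow hz (β + 1)).smul_const ((ω, 0) : Pt N))
  rw [add_sub_cancel_right] at h
  exact h

lemma differentiableAt_Sbo (β : ℝ) (ω : Fin N → ℝ) {g : Pt N → ℝ} {z : Pt N} (hz : 0 < z.2)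
    (hg : DifferentiableAt ℝ g (shear β ω z)) : DifferentiableAt ℝ (Sbo β ω g) z := by
  rw [show Sbo β ω g = g ∘ shear β ω from funext (Sbo_apply β ω g)]
  exact hg.comp z (hasFDerivAt_shear β ω hz).differentiableAt

lemma pd_Sbo (β : ℝ) (ω : Fin N → ℝ) {g : Pt N → ℝ} {z : Pt N} (hz : 0 < z.2)
    (hg : DifferentiableAt ℝ g (shear β ω z)) (v : Pt N) :
    pd v (Sbo β ω g) z
      = Sbo β ω (pd v g) z + (β + 1) * v.2 * (z.2 ^ β * Sbo β ω (pd (ω, 0) g) z) := by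
  rw [show Sbo β ω g = g ∘ shear β ω from funext (Sbo_apply β ω g), pd,
    (hg.hasFDerivAt.comp z (hasFDerivAt_shear β ω hz)).fderiv]
  simp only [ContinuousLinearMap.comp_apply, _root_.add_apply,
    ContinuousLinearMap.id_apply, ContinuousLinearMap.smulRight_apply,
    _root_.smul_apply, ContinuousLinearMap.coe_snd', smul_eq_mul, map_add, map_smul,
    Sbo_apply, pd]
  ring

lemma pd_Sbo_eventuallyEq (β : ℝ) (ω : Fin N → ℝ) {g : Pt N → ℝ}
    (hg : DifferentiableOn ℝ g {z : Pt N | 0 < z.2}) {z : Pt N} (hz : 0 < z.2) (v : Pt N) :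
    pd v (Sbo β ω g) =ᶠ[𝓝 z]
      fun w => Sbo β ω (pd v g) w + (β + 1) * v.2 * (w.2 ^ β * Sbo β ω (pd (ω, 0) g) w) := by
  filter_upwards [isOpen_setOf_snd_pos.mem_nhds hz] with w hw
  refine pd_Sbo β ω hw (hg.differentiableAt (isOpen_setOf_snd_pos.mem_nhds ?_)) v
  simpa using hw

lemma pd_pd_Sbo (β : ℝ) (ω : Fin N → ℝ) {u : Pt N → ℝ}
    (hu : ContDiffOn ℝ 2 u {z : Pt N | 0 < z.2}) {z : Pt N} (hz : 0 < z.2) (v w : Pt N) :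
    pd v (pd w (Sbo β ω u)) z
      = Sbo β ω (pd v (pd w u)) z + (β + 1) * v.2 * (z.2 ^ β * Sbo β ω (pd (ω, 0) (pd w u)) z)
        + (β + 1) * w.2 * (β * z.2 ^ (β - 1) * v.2 * Sbo β ω (pd (ω, 0) u) z
          + z.2 ^ β * (Sbo β ω (pd v (pd (ω, 0) u)) z
            + (β + 1) * v.2 * (z.2 ^ β * Sbo β ω (pd (ω, 0) (pd (ω, 0) u)) z))) := by
  have hd : ∀ p, DifferentiableAt ℝ (pd p u) (shear β ω z) := fun p =>
    differentiableAt_pd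
      (hu.contDiffAt (isOpen_setOf_snd_pos.mem_nhds (by simpa using hz))).differentiableAt_fderiv p
  have hS : ∀ p, DifferentiableAt ℝ (Sbo β ω (pd p u)) z := fun p =>
    differentiableAt_Sbo β ω hz (hd p)
  have hpow := (hasFDerivAt_snd_rpow hz β).differentiableAt
  rw [pd_congr (pd_Sbo_eventuallyEq β ω (hu.differentiableOn two_ne_zero) hz w) v,
    pd_add (hS w) ((hpow.fun_mul (hS _)).const_mul _), pd_const_mul (hpow.fun_mul (hS _)),
    pd_mul hpow (hS _), pd_snd_rpow hz, pd_Sbo β ω hz (hd w), pd_Sbo β ω hz (hd _)]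

theorem statement12_general (N : ℕ)
    (Q : Matrix (Fin N) (Fin N) ℝ) (q d : Fin N → ℝ)
    (γ c b α₁ α₂ β : ℝ) (ω : Fin N → ℝ)
    (u : Pt N → ℝ) (hu : ContDiffOn ℝ 2 u {z : Pt N | 0 < z.2}) :
    ∀ z : Pt N, 0 < z.2 →
      opL Q q d γ c b α₁ α₂ (Sbo β ω u) z
        = Sbo β ω (fun w =>
            w.2 ^ α₁ * (∑ i, ∑ j, Q i j * pd (ex i) (pd (ex j) u) w)
              + 2 * (β + 1) * w.2 ^ ((α₁ + α₂ + 2 * β) / 2) *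
                  (∑ i, ∑ j, q i * ω j * pd (ex i) (pd (ex j) u) w)
              + γ * (β + 1) ^ 2 * w.2 ^ (α₂ + 2 * β) *
                  (∑ i, ∑ j, ω i * ω j * pd (ex i) (pd (ex j) u) w)
              + 2 * w.2 ^ ((α₁ + α₂) / 2) * (∑ i, q i * pd (ex i) (pd ey u) w)
              + 2 * γ * (β + 1) * w.2 ^ (α₂ + β) * (∑ i, ω i * pd (ex i) (pd ey u) w)
              + γ * w.2 ^ α₂ * pd ey (pd ey u) w
              + c * w.2 ^ (α₂ - 1) * pd ey u w
              - b * w.2 ^ (α₂ - 2) * u w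
              + (c + γ * β) * (β + 1) * w.2 ^ (α₂ + β - 1) * (∑ i, ω i * pd (ex i) u w)
              + w.2 ^ ((α₁ + α₂) / 2 - 1) * (∑ i, d i * pd (ex i) u w)) z := by
  intro z hz
  have hC : ContDiffAt ℝ 2 u (shear β ω z) :=
    hu.contDiffAt (isOpen_setOf_snd_pos.mem_nhds (by simpa using hz))
  have hB := hC.differentiableAt_fderiv
  simp only [opL, ← pd_mk_zero_eq_sum]
  simp only [pd_pd_Sbo β ω hu hz, pd_Sbo β ω hz (hC.differentiableAt two_ne_zero), Sbo_apply,
    shear_snd, ex_snd, ey_snd, mul_zero, zero_mul, add_zero, zero_add, mul_one,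
    hC.pd_pd_comm ey, ← pd_pd_mk_zero_eq_sum hB]
  have hpow : ∀ a b : ℝ, z.2 ^ (a + b) = z.2 ^ a * z.2 ^ b := fun a b => Real.rpow_add hz a b
  have hshift : z.2 ^ (α₂ - 1) * z.2 ^ β = z.2 ^ α₂ * z.2 ^ (β - 1) := by
    rw [← hpow, ← hpow]
    ring_nf
  rw [show (α₁ + α₂ + 2 * β) / 2 = (α₁ + α₂) / 2 + β by ring, show α₂ + 2 * β = α₂ + β + β by ring,
    show α₂ + β - 1 = α₂ + (β - 1) by ring]
  simp only [hpow]
  -- `γ y^{α₂} ∂_y (y^β)` and `c y^{α₂-1} y^β` merge into the `(c + γβ)` coefficient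
  linear_combination c * (β + 1) * pd (ω, 0) u (shear β ω z) * hshift

/-- Conjugation of the degenerate operator by `S_{β,ω}`:
`ℒ(S_{β,ω} u) = S_{β,ω}(M u)`. -/
theorem statement12 (N : ℕ) (hN : 1 ≤ N)
    (Q : Matrix (Fin N) (Fin N) ℝ) (hQ : Q.IsSymm) (q d : Fin N → ℝ)
    (γ c b α₁ α₂ β : ℝ) (hβ : β ≠ -1) (ω : Fin N → ℝ)
    (u : Pt N → ℝ) (hu : ContDiffOn ℝ 2 u {z : Pt N | 0 < z.2}) :
    ∀ z : Pt N, 0 < z.2 →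
      opL Q q d γ c b α₁ α₂ (Sbo β ω u) z
        = Sbo β ω (fun w =>
            w.2 ^ α₁ * (∑ i, ∑ j, Q i j * pd (ex i) (pd (ex j) u) w)
              + 2 * (β + 1) * w.2 ^ ((α₁ + α₂ + 2 * β) / 2) *
                  (∑ i, ∑ j, q i * ω j * pd (ex i) (pd (ex j) u) w)
              + γ * (β + 1) ^ 2 * w.2 ^ (α₂ + 2 * β) *
                  (∑ i, ∑ j, ω i * ω j * pd (ex i) (pd (ex j) u) w)
              + 2 * w.2 ^ ((α₁ + α₂) / 2) * (∑ i, q i * pd (ex i) (pd ey u) w)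
              + 2 * γ * (β + 1) * w.2 ^ (α₂ + β) * (∑ i, ω i * pd (ex i) (pd ey u) w)
              + γ * w.2 ^ α₂ * pd ey (pd ey u) w
              + c * w.2 ^ (α₂ - 1) * pd ey u w
              - b * w.2 ^ (α₂ - 2) * u w
              + (c + γ * β) * (β + 1) * w.2 ^ (α₂ + β - 1) * (∑ i, ω i * pd (ex i) u w)
              + w.2 ^ ((α₁ + α₂) / 2 - 1) * (∑ i, d i * pd (ex i) u w)) z :=
  statement12_general N Q q d γ c b α₁ α₂ β ω u hu
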